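/- Let h ∈ ℝⁿ and P > 0, and set G = I - (P/(1+P‖h‖²)) h hᵀ. Then G is positive definite, is of the form I - α v vᵀ with v = h/‖h‖ (when h ≠ 0) and α = P‖h‖²/(1+P‖h‖²) ∈ [0,1), and its smallest eigenvalue is 1/(1+P‖h‖²). Consequently any minimizer a* of aᵀ G a over ℤⁿ \ {0} satisfies ‖a*‖ ≤ √(1 + P‖h‖²). -/

import Mathlib

/-!
On `h` the matrix `G = 1 - c hhᵀ` acts as multiplication by `1 - c‖h‖²`, while by Cauchy–Schwarz
`xᵀGx ≥ ‖x‖² - c (hᵀx)² ≥ (1 - c‖h‖²)‖x‖²`; for `c = P/(1+P‖h‖²)` this number is `1/(1+P‖h‖²)`,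
so it is the smallest eigenvalue of `G`. A minimizer `a` of the quadratic form over nonzero integer
vectors satisfies `‖a‖²/(1+P‖h‖²) ≤ aᵀGa ≤ e_jᵀGe_j = 1 - c h_j² ≤ 1`.
-/

open Matrix BigOperators

namespace Matrix

variable {ι : Type*}

theorem vecMulVec_div_sqrt (u v : ι → ℝ) {t : ℝ} (ht : 0 ≤ t) :
    vecMulVec (fun i => u i / √t) (fun i => v i / √t) = t⁻¹ • vecMulVec u v := by
  ext i j
  rw [smul_apply, vecMulVec_apply, vecMulVec_apply, div_mul_div_comm, Real.mul_self_sqrt ht,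
    smul_eq_mul, div_eq_inv_mul]

variable [Fintype ι]

theorem sq_dotProduct_le_dotProduct_self_mul_dotProduct_self (u v : ι → ℝ) :
    (u ⬝ᵥ v) ^ 2 ≤ (u ⬝ᵥ u) * (v ⬝ᵥ v) := by
  simpa only [dotProduct, sq] using Finset.sum_mul_sq_le_sq_mul_sq Finset.univ u v

theorem dotProduct_self_pos {v : ι → ℝ} (hv : v ≠ 0) : 0 < v ⬝ᵥ v := by
  simpa using dotProduct_star_self_pos_iff.mpr hv

namespace IsHermitian

variable [DecidableEq ι] {A : Matrix ι ι ℝ} (hA : A.IsHermitian)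

theorem le_eigenvalues_of_forall_mul_dotProduct_self_le {μ : ℝ}
    (hμ : ∀ x, μ * (x ⬝ᵥ x) ≤ x ⬝ᵥ A *ᵥ x) (i : ι) : μ ≤ hA.eigenvalues i := by
  set v : ι → ℝ := ⇑(hA.eigenvectorBasis i)
  have hv : 0 < v ⬝ᵥ v :=
    dotProduct_self_pos <| (WithLp.ofLp_eq_zero 2).ne.2 <| hA.eigenvectorBasis.orthonormal.ne_zero i
  have := hμ v
  rw [hA.mulVec_eigenvectorBasis, dotProduct_smul, smul_eq_mul] at this
  exact le_of_mul_le_mul_right this hv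

theorem exists_eigenvalues_eq_of_mulVec_eq_smul {μ : ℝ} {v : ι → ℝ} (hv : v ≠ 0)
    (hAv : A *ᵥ v = μ • v) : ∃ i, hA.eigenvalues i = μ := by
  have hμ : μ ∈ spectrum ℝ A := by
    rw [← spectrum_toLin', ← Module.End.hasEigenvalue_iff_mem_spectrum]
    exact Module.End.hasEigenvalue_of_hasEigenvector
      ⟨Module.End.mem_eigenspace_iff.mpr (by rwa [toLin'_apply]), hv⟩
  rwa [hA.spectrum_real_eq_range_eigenvalues] at hμ

end IsHermitian

theorem intCast_dotProduct_self_le_inv_of_forall_le [DecidableEq ι] {A : Matrix ι ι ℝ} {μ : ℝ}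
    (hμ : 0 < μ) (hbound : ∀ x, μ * (x ⬝ᵥ x) ≤ x ⬝ᵥ A *ᵥ x)
    (hsingle : ∀ j, Pi.single j 1 ⬝ᵥ A *ᵥ Pi.single j 1 ≤ 1) {a : ι → ℤ} (ha : a ≠ 0)
    (hmin : ∀ b : ι → ℤ, b ≠ 0 →
      (fun i => (a i : ℝ)) ⬝ᵥ A *ᵥ (fun i => (a i : ℝ)) ≤
        (fun i => (b i : ℝ)) ⬝ᵥ A *ᵥ (fun i => (b i : ℝ))) :
    (fun i => (a i : ℝ)) ⬝ᵥ (fun i => (a i : ℝ)) ≤ μ⁻¹ := by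
  obtain ⟨j, -⟩ := Function.ne_iff.mp ha
  have hcast : (fun i => ((Pi.single j 1 : ι → ℤ) i : ℝ)) = Pi.single j 1 := by
    ext i
    by_cases hij : i = j <;> simp [hij]
  have hle := hmin (Pi.single j 1) (by simp)
  rw [hcast] at hle
  rw [← mul_one μ⁻¹, le_inv_mul_iff₀ hμ]
  exact ((hbound _).trans hle).trans (hsingle j)

section RankOne

variable [DecidableEq ι] (c : ℝ) (h : ι → ℝ)

theorem isHermitian_one_sub_smul_vecMulVec : (1 - c • vecMulVec h h).IsHermitian := by
  refine isHermitian_one.sub (IsHermitian.smul ?_ (IsSelfAdjoint.all c))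
  simpa using (posSemidef_vecMulVec_self_star h).1

theorem dotProduct_one_sub_smul_vecMulVec_mulVec (x : ι → ℝ) :
    x ⬝ᵥ (1 - c • vecMulVec h h) *ᵥ x = x ⬝ᵥ x - c * (h ⬝ᵥ x) ^ 2 := by
  simp only [sub_mulVec, one_mulVec, smul_mulVec, vecMulVec_mulVec, op_smul_eq_smul,
    dotProduct_sub, dotProduct_smul, smul_eq_mul, dotProduct_comm x h]
  ring

theorem one_sub_smul_vecMulVec_mulVec_self :
    (1 - c • vecMulVec h h) *ᵥ h = (1 - c * (h ⬝ᵥ h)) • h := by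
  simp only [sub_mulVec, one_mulVec, smul_mulVec, vecMulVec_mulVec, op_smul_eq_smul, smul_smul,
    sub_smul, one_smul]

variable {c}

theorem mul_dotProduct_self_le_dotProduct_one_sub_smul_vecMulVec_mulVec (hc : 0 ≤ c)
    (x : ι → ℝ) : (1 - c * (h ⬝ᵥ h)) * (x ⬝ᵥ x) ≤ x ⬝ᵥ (1 - c • vecMulVec h h) *ᵥ x := by
  rw [dotProduct_one_sub_smul_vecMulVec_mulVec]
  nlinarith [mul_le_mul_of_nonneg_left
    (sq_dotProduct_le_dotProduct_self_mul_dotProduct_self h x) hc]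

theorem posDef_one_sub_smul_vecMulVec (hc : 0 ≤ c) (hch : c * (h ⬝ᵥ h) < 1) :
    (1 - c • vecMulVec h h).PosDef :=
  .of_dotProduct_mulVec_pos (isHermitian_one_sub_smul_vecMulVec c h) fun x hx =>
    (mul_pos (sub_pos.2 hch) (dotProduct_self_pos hx)).trans_le
      (mul_dotProduct_self_le_dotProduct_one_sub_smul_vecMulVec_mulVec h hc x)

theorem single_dotProduct_one_sub_smul_vecMulVec_mulVec_single_le_one (hc : 0 ≤ c) (j : ι) :
    Pi.single j 1 ⬝ᵥ (1 - c • vecMulVec h h) *ᵥ Pi.single j 1 ≤ 1 := by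
  rw [dotProduct_one_sub_smul_vecMulVec_mulVec]
  simp only [dotProduct_single, mul_one, Pi.single_eq_same]
  nlinarith [sq_nonneg (h j)]

variable (c) in
theorem exists_ne_zero_one_sub_smul_vecMulVec_mulVec_eq_smul [Nonempty ι] :
    ∃ v ≠ 0, (1 - c • vecMulVec h h) *ᵥ v = (1 - c * (h ⬝ᵥ h)) • v := by
  by_cases hh : h = 0
  · obtain ⟨i⟩ := ‹Nonempty ι›
    refine ⟨Pi.single i 1, by simp, ?_⟩
    simp only [hh, vecMulVec_zero, smul_zero, sub_zero, one_mulVec, dotProduct_zero, mul_zero,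
      one_smul]
  · exact ⟨h, hh, one_sub_smul_vecMulVec_mulVec_self c h⟩

end RankOne

end Matrix

theorem stmt_15 {n : ℕ} (hn : 0 < n) (h : Fin n → ℝ) (P : ℝ) (hP : 0 < P)
    (s : ℝ) (hs : s = ∑ i, h i ^ 2)
    (G : Matrix (Fin n) (Fin n) ℝ)
    (hG : G = 1 - (P / (1 + P * s)) • Matrix.vecMulVec h h) :
    G.PosDef ∧
    (h ≠ 0 →
      G = 1 - (P * s / (1 + P * s)) •
        Matrix.vecMulVec (fun i => h i / Real.sqrt s) (fun i => h i / Real.sqrt s) ∧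
      0 ≤ P * s / (1 + P * s) ∧ P * s / (1 + P * s) < 1) ∧
    (∀ hpd : G.PosDef,
      (∀ i, 1 / (1 + P * s) ≤ hpd.1.eigenvalues i) ∧
      (∃ i, hpd.1.eigenvalues i = 1 / (1 + P * s))) ∧
    (∀ a : Fin n → ℤ, a ≠ 0 →
      (∀ b : Fin n → ℤ, b ≠ 0 →
        (fun i => (a i : ℝ)) ⬝ᵥ G.mulVec (fun i => (a i : ℝ)) ≤
        (fun i => (b i : ℝ)) ⬝ᵥ G.mulVec (fun i => (b i : ℝ))) →
      Real.sqrt (∑ i, (a i : ℝ) ^ 2) ≤ Real.sqrt (1 + P * s)) := by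
  subst hG
  have hss : h ⬝ᵥ h = s := by simp [hs, dotProduct, sq]
  have hs0 : 0 ≤ s := hss ▸ dotProduct_self_star_nonneg h
  have hQ : 0 < 1 + P * s := by positivity
  have hc : 0 ≤ P / (1 + P * s) := by positivity
  have hμ : 1 - P / (1 + P * s) * (h ⬝ᵥ h) = 1 / (1 + P * s) := by
    rw [hss]; field_simp; ring
  have hbound := mul_dotProduct_self_le_dotProduct_one_sub_smul_vecMulVec_mulVec h hc
  rw [hμ] at hbound
  refine ⟨posDef_one_sub_smul_vecMulVec h hc (by rw [← sub_pos, hμ]; positivity),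
    fun hne => ⟨?_, by positivity, by rw [div_lt_one hQ]; linarith⟩,
    fun hpd => ⟨hpd.1.le_eigenvalues_of_forall_mul_dotProduct_self_le hbound, ?_⟩,
    fun a ha hmin => ?_⟩
  · have hs_ne : s ≠ 0 := hss ▸ dotProduct_self_eq_zero.not.2 hne
    rw [vecMulVec_div_sqrt h h hs0, smul_smul]
    congr 2
    field_simp
  · have : Nonempty (Fin n) := Fin.pos_iff_nonempty.mp hn
    obtain ⟨v, hv, hGv⟩ :=
      exists_ne_zero_one_sub_smul_vecMulVec_mulVec_eq_smul (P / (1 + P * s)) h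
    rw [hμ] at hGv
    exact hpd.1.exists_eigenvalues_eq_of_mulVec_eq_smul hv hGv
  · have := intCast_dotProduct_self_le_inv_of_forall_le (by positivity) hbound
      (single_dotProduct_one_sub_smul_vecMulVec_mulVec_single_le_one h hc) ha hmin
    rw [one_div, inv_inv] at this
    exact Real.sqrt_le_sqrt (by simpa [dotProduct, sq] using this)
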